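/- Let Λ = Σ_{i=1}^{JK} λ_i > 0, let V̄^C = (Σ_{i=1}^{JK} λ_i V̄_i)/Λ be the centroid matrix, and let B_C ∈ ℝ^{J×R}, C_C ∈ ℝ^{K×R} be the matrices whose columns are the top R left and right singular vectors of V̄^C, respectively. Then the suboptimality of (B_C, C_C) is bounded a posteriori by | 𝔍_red(B_C, C_C) − inf_{B,C} 𝔍_red(B,C) | ≤ (1/2)·( Σ_{i=1}^{JK} λ_i Σ_{k=1}^{R} (σ_k^i)² − Λ·Σ_{k=1}^{R} σ_k(V̄^C)² ), where σ_k^i denotes the k-th largest singular value of V̄_i and σ_k(V̄^C) the k-th largest singular value of V̄^C. -/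

import Mathlib

open Finset Module
open scoped InnerProductSpace

/-- The CP least-squares functional. -/
noncomputable def Jfun {I J K R : ℕ} (T : Fin I → Fin J → Fin K → ℝ)
    (A : Matrix (Fin I) (Fin R) ℝ) (B : Matrix (Fin J) (Fin R) ℝ)
    (C : Matrix (Fin K) (Fin R) ℝ) : ℝ :=
  (1 / 2) * ∑ i, ∑ j, ∑ k, (T i j k - ∑ r, A i r * B j r * C k r) ^ 2

/-- The reduced functional `𝔍_red(B,C) = inf_A 𝔍(A,B,C)`. -/
noncomputable def Jred {I J K R : ℕ} (T : Fin I → Fin J → Fin K → ℝ)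
    (B : Matrix (Fin J) (Fin R) ℝ) (C : Matrix (Fin K) (Fin R) ℝ) : ℝ :=
  ⨅ A : Matrix (Fin I) (Fin R) ℝ, Jfun T A B C

/-- The matrix `M ∈ ℝ^{JK×JK}` with entries `M_{(α,β),(γ,δ)} = ∑ᵢ T_{iαβ} T_{iγδ}`. -/
noncomputable def Mmat {I J K : ℕ} (T : Fin I → Fin J → Fin K → ℝ) :
    Matrix (Fin J × Fin K) (Fin J × Fin K) ℝ :=
  Matrix.of fun p q => ∑ i, T i p.1 p.2 * T i q.1 q.2

/-- The matricization `V̄ᵢ ∈ ℝ^{J×K}` of the eigenvector `v̄ᵢ ∈ ℝ^{JK}`. -/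
noncomputable def Vbar {J K N : ℕ} (v : Fin N → (Fin J × Fin K) → ℝ) (i : Fin N) :
    Matrix (Fin J) (Fin K) ℝ :=
  Matrix.of fun j k => v i (j, k)

/-- The centroid matrix `V̄^C = (∑ᵢ λᵢ V̄ᵢ)/Λ`. -/
noncomputable def centroid {J K N : ℕ} (lam : Fin N → ℝ)
    (v : Fin N → (Fin J × Fin K) → ℝ) : Matrix (Fin J) (Fin K) ℝ :=
  (∑ i, lam i)⁻¹ • ∑ i, lam i • Vbar v i

/-- `σ : Fin (min J K) → ℝ` lists the singular values of `X` in decreasing order: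
they are nonnegative, decreasing, and `X` admits a singular value decomposition
`X = ∑ₖ σₖ yₖ zₖᵀ` with orthonormal families `y`, `z`. -/
def IsSingularValues {J K : ℕ} (X : Matrix (Fin J) (Fin K) ℝ)
    (σ : Fin (min J K) → ℝ) : Prop :=
  Antitone σ ∧ (∀ k, 0 ≤ σ k) ∧
  ∃ (y : Fin (min J K) → Fin J → ℝ) (z : Fin (min J K) → Fin K → ℝ),
    (∀ k l, (∑ j, y k j * y l j) = if k = l then 1 else 0) ∧
    (∀ k l, (∑ j, z k j * z l j) = if k = l then 1 else 0) ∧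
    (∀ j k', X j k' = ∑ k, σ k * y k j * z k k')

section aux
variable {J K : ℕ}

lemma sep_dot (c c' : Fin J → ℝ) (d d' : Fin K → ℝ) :
    ∑ p : Fin J × Fin K, (c p.1 * d p.2) * (c' p.1 * d' p.2)
      = (∑ j, c j * c' j) * (∑ k, d k * d' k) := by
  rw [Fintype.sum_prod_type, Finset.sum_mul_sum]
  exact Finset.sum_congr rfl fun j _ => Finset.sum_congr rfl fun k _ => by ring

lemma sep_inner_one {n : ℕ} (a : Fin n → Fin J → ℝ) (bz : Fin n → Fin K → ℝ)
    (c : Fin J → ℝ) (d : Fin K → ℝ) :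
    ∑ p : Fin J × Fin K, (∑ k, a k p.1 * bz k p.2) * (c p.1 * d p.2)
      = ∑ k, (∑ j, a k j * c j) * (∑ k', bz k k' * d k') := by
  calc ∑ p : Fin J × Fin K, (∑ k, a k p.1 * bz k p.2) * (c p.1 * d p.2)
      = ∑ p : Fin J × Fin K, ∑ k, (a k p.1 * bz k p.2) * (c p.1 * d p.2) :=
        Finset.sum_congr rfl fun p _ => Finset.sum_mul _ _ _
    _ = ∑ k, ∑ p : Fin J × Fin K, (a k p.1 * bz k p.2) * (c p.1 * d p.2) :=
        Finset.sum_comm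
    _ = ∑ k, (∑ j, a k j * c j) * (∑ k', bz k k' * d k') :=
        Finset.sum_congr rfl fun k _ => sep_dot (a k) c (bz k) d

lemma sep_inner2 {n m : ℕ} (a : Fin n → Fin J → ℝ) (bz : Fin n → Fin K → ℝ)
    (c : Fin m → Fin J → ℝ) (d : Fin m → Fin K → ℝ) :
    ∑ p : Fin J × Fin K, (∑ k, a k p.1 * bz k p.2) * (∑ l, c l p.1 * d l p.2)
      = ∑ l, ∑ k, (∑ j, a k j * c l j) * (∑ k', bz k k' * d l k') := by
  calc ∑ p : Fin J × Fin K, (∑ k, a k p.1 * bz k p.2) * (∑ l, c l p.1 * d l p.2)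
      = ∑ p : Fin J × Fin K, ∑ l, (∑ k, a k p.1 * bz k p.2) * (c l p.1 * d l p.2) :=
        Finset.sum_congr rfl fun p _ => Finset.mul_sum _ _ _
    _ = ∑ l, ∑ p : Fin J × Fin K, (∑ k, a k p.1 * bz k p.2) * (c l p.1 * d l p.2) :=
        Finset.sum_comm
    _ = ∑ l, ∑ k, (∑ j, a k j * c l j) * (∑ k', bz k k' * d l k') :=
        Finset.sum_congr rfl fun l _ => sep_inner_one a bz (c l) (d l)

lemma filter_lt_eq_map {n R : ℕ} (hR : R ≤ n) :
    Finset.univ.filter (fun k : Fin n => (k : ℕ) < R)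
      = Finset.map (Fin.castLEEmb hR) Finset.univ := by
  ext k
  simp only [Finset.mem_filter, Finset.mem_univ, true_and, Finset.mem_map,
    Fin.castLEEmb_apply]
  constructor
  · intro h; exact ⟨⟨k, h⟩, by ext; simp⟩
  · rintro ⟨r, rfl⟩; simpa using r.2

lemma card_filter_lt {n R : ℕ} (hR : R ≤ n) :
    (Finset.univ.filter (fun k : Fin n => (k : ℕ) < R)).card = R := by
  rw [filter_lt_eq_map hR]; simp

lemma sum_filter_lt {n R : ℕ} (hR : R ≤ n) (f : Fin n → ℝ) :
    ∑ k ∈ Finset.univ.filter (fun k : Fin n => (k : ℕ) < R), f k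
      = ∑ r : Fin R, f ⟨r, lt_of_lt_of_le r.2 hR⟩ := by
  rw [filter_lt_eq_map hR, Finset.sum_map]
  exact Finset.sum_congr rfl fun r _ => rfl

/-- If `σ` is antitone nonneg and `t ∈ [0,1]` with `∑ t ≤ R`, then
`∑ σ² t ≤ ∑_{k < R} σ²`. -/
lemma lemA {n R : ℕ} (hR : R ≤ n) (σ : Fin n → ℝ) (hanti : Antitone σ)
    (hnn : ∀ k, 0 ≤ σ k) (t : Fin n → ℝ) (ht0 : ∀ k, 0 ≤ t k) (ht1 : ∀ k, t k ≤ 1)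
    (hts : ∑ k, t k ≤ R) :
    ∑ k, σ k ^ 2 * t k ≤ ∑ k ∈ Finset.univ.filter (fun k : Fin n => (k : ℕ) < R), σ k ^ 2 := by
  classical
  set s := Finset.univ.filter (fun k : Fin n => (k : ℕ) < R) with hs
  set σ' : ℝ := if h : R < n then σ ⟨R, h⟩ else 0 with hσ'
  have hσ'nn : 0 ≤ σ' := by
    rw [hσ']; split
    · exact hnn _
    · exact le_rfl
  have hles : ∀ k ∈ s, σ' ≤ σ k := by
    intro k hk
    rw [hs, Finset.mem_filter] at hk
    rw [hσ']; split
    · exact hanti (by exact Fin.le_def.2 (le_of_lt hk.2))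
    · exact hnn k
  have hgts : ∀ k ∈ sᶜ, σ k ≤ σ' := by
    intro k hk
    rw [Finset.mem_compl, hs, Finset.mem_filter] at hk
    have hk' : R ≤ (k : ℕ) := not_lt.1 (by simpa [hs] using hk)
    have hRn : R < n := lt_of_le_of_lt hk' k.2
    rw [hσ', dif_pos hRn]
    exact hanti (Fin.le_def.2 hk')
  have hcard : (s : Finset (Fin n)).card = R := card_filter_lt hR
  have split1 : ∑ k, σ k ^ 2 * t k = ∑ k ∈ s, σ k ^ 2 * t k + ∑ k ∈ sᶜ, σ k ^ 2 * t k :=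
    (Finset.sum_add_sum_compl s _).symm
  have hcompl : ∑ k ∈ sᶜ, σ k ^ 2 * t k ≤ σ' ^ 2 * ∑ k ∈ sᶜ, t k := by
    rw [Finset.mul_sum]
    refine Finset.sum_le_sum fun k hk => ?_
    have h1 := hgts k hk
    have h2 := hnn k
    have h3 : σ k ^ 2 ≤ σ' ^ 2 := by nlinarith
    exact mul_le_mul_of_nonneg_right h3 (ht0 k)
  have hsum_compl : ∑ k ∈ sᶜ, t k ≤ R - ∑ k ∈ s, t k := by
    have := Finset.sum_add_sum_compl s t
    linarith
  have hts_le : ∑ k ∈ s, t k ≤ R := by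
    calc ∑ k ∈ s, t k ≤ ∑ k ∈ s, 1 := Finset.sum_le_sum fun k _ => ht1 k
    _ = R := by rw [Finset.sum_const, hcard]; simp
  have hmain : ∑ k ∈ s, σ k ^ 2 * t k ≤ ∑ k ∈ s, σ k ^ 2 - σ' ^ 2 * (R - ∑ k ∈ s, t k) := by
    have h1 : ∑ k ∈ s, σ' ^ 2 * (1 - t k) ≤ ∑ k ∈ s, σ k ^ 2 * (1 - t k) := by
      refine Finset.sum_le_sum fun k hk => ?_
      have h2 := hles k hk
      have h4 := hnn k
      have h3 : σ' ^ 2 ≤ σ k ^ 2 := by nlinarith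
      have h5 : 0 ≤ 1 - t k := by linarith [ht1 k]
      exact mul_le_mul_of_nonneg_right h3 h5
    have h3 : ∑ k ∈ s, σ' ^ 2 * (1 - t k) = σ' ^ 2 * (R - ∑ k ∈ s, t k) := by
      rw [← Finset.mul_sum, Finset.sum_sub_distrib, Finset.sum_const, hcard]
      simp
    have h4 : ∑ k ∈ s, σ k ^ 2 * (1 - t k) = ∑ k ∈ s, σ k ^ 2 - ∑ k ∈ s, σ k ^ 2 * t k := by
      rw [← Finset.sum_sub_distrib]
      exact Finset.sum_congr rfl fun k _ => by ring
    linarith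
  have hc2 : σ' ^ 2 * ∑ k ∈ sᶜ, t k ≤ σ' ^ 2 * (R - ∑ k ∈ s, t k) := by
    apply mul_le_mul_of_nonneg_left hsum_compl (by positivity)
  linarith

end aux

lemma einner_eq {ι : Type*} [Fintype ι] (x y : EuclideanSpace ℝ ι) :
    ⟪x, y⟫_ℝ = ∑ p, x p * y p := by
  simp [PiLp.inner_apply, RCLike.inner_apply]
  exact Finset.sum_congr rfl fun _ _ => mul_comm _ _

lemma pythagoras_proj {E : Type*} [NormedAddCommGroup E] [InnerProductSpace ℝ E]
    (W : Submodule ℝ E) [W.HasOrthogonalProjection] (x : E) :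
    ‖x‖ ^ 2 = ‖x - (Submodule.orthogonalProjectionOnto W x : E)‖ ^ 2 + ‖(Submodule.orthogonalProjectionOnto W x : E)‖ ^ 2 := by
  have h0 : ⟪x - (Submodule.orthogonalProjectionOnto W x : E), (Submodule.orthogonalProjectionOnto W x : E)⟫_ℝ = 0 :=
    Submodule.starProjection_inner_eq_zero x _ (Submodule.orthogonalProjectionOnto W x).2
  have hx : x = (x - (Submodule.orthogonalProjectionOnto W x : E)) + (Submodule.orthogonalProjectionOnto W x : E) := by abel
  calc ‖x‖ ^ 2 = ‖(x - (Submodule.orthogonalProjectionOnto W x : E)) + (Submodule.orthogonalProjectionOnto W x : E)‖ ^ 2 := by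
        rw [← hx]
    _ = _ := by rw [norm_add_sq_real, h0]; ring

lemma inner_proj_eq_normsq {E : Type*} [NormedAddCommGroup E] [InnerProductSpace ℝ E]
    (W : Submodule ℝ E) [W.HasOrthogonalProjection] (x : E) :
    ⟪x, (Submodule.orthogonalProjectionOnto W x : E)⟫_ℝ = ‖(Submodule.orthogonalProjectionOnto W x : E)‖ ^ 2 := by
  have h0 : ⟪x - (Submodule.orthogonalProjectionOnto W x : E), (Submodule.orthogonalProjectionOnto W x : E)⟫_ℝ = 0 :=
    Submodule.starProjection_inner_eq_zero x _ (Submodule.orthogonalProjectionOnto W x).2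
  rw [inner_sub_left] at h0
  have := real_inner_self_eq_norm_sq ((Submodule.orthogonalProjectionOnto W x : E))
  linarith

lemma inner_proj_of_mem {E : Type*} [NormedAddCommGroup E] [InnerProductSpace ℝ E]
    (W : Submodule ℝ E) [W.HasOrthogonalProjection] (x w : E) (hw : w ∈ W) :
    ⟪w, (Submodule.orthogonalProjectionOnto W x : E)⟫_ℝ = ⟪w, x⟫_ℝ := by
  have h0 : ⟪x - (Submodule.orthogonalProjectionOnto W x : E), w⟫_ℝ = 0 :=
    Submodule.starProjection_inner_eq_zero x w hw
  rw [inner_sub_left] at h0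
  rw [real_inner_comm x w, real_inner_comm ((Submodule.orthogonalProjectionOnto W x : E)) w]
  linarith

/-- Parseval for the projection: `‖P_W x‖² = ∑ₛ ⟪uₛ, x⟫²` for an orthonormal basis of `W`. -/
lemma proj_sq_sum {E : Type*} [NormedAddCommGroup E] [InnerProductSpace ℝ E]
    [FiniteDimensional ℝ E] (W : Submodule ℝ E) (x : E) :
    ‖(Submodule.orthogonalProjectionOnto W x : E)‖ ^ 2
      = ∑ s, ⟪((stdOrthonormalBasis ℝ W) s : E), x⟫_ℝ ^ 2 := by
  set b := stdOrthonormalBasis ℝ W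
  have hrepr : ∀ s, b.repr (Submodule.orthogonalProjectionOnto W x) s = ⟪((b s : W) : E), x⟫_ℝ := by
    intro s
    rw [OrthonormalBasis.repr_apply_apply, Submodule.coe_inner]
    exact inner_proj_of_mem W x (b s : E) (b s).2
  have hn : ‖(Submodule.orthogonalProjectionOnto W x : E)‖ = ‖b.repr (Submodule.orthogonalProjectionOnto W x)‖ := by
    rw [b.repr.norm_map, Submodule.norm_coe]
  rw [hn, EuclideanSpace.norm_eq, Real.sq_sqrt (by positivity)]
  exact Finset.sum_congr rfl fun s _ => by rw [hrepr s, Real.norm_eq_abs, sq_abs]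

/-- Key lemma: for `x` in the span of `R` separable (rank-one) matrices, the inner product
with `X = ∑ σₖ yₖ zₖᵀ` is controlled by the top `R` singular values. -/
lemma lemB {J K R : ℕ} (hR : R ≤ min J K)
    (Bm : Matrix (Fin J) (Fin R) ℝ) (Cm : Matrix (Fin K) (Fin R) ℝ)
    (σ : Fin (min J K) → ℝ) (hanti : Antitone σ) (hnn : ∀ k, 0 ≤ σ k)
    (y : Fin (min J K) → Fin J → ℝ) (z : Fin (min J K) → Fin K → ℝ)
    (hy : ∀ k l, (∑ j, y k j * y l j) = if k = l then 1 else 0)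
    (hz : ∀ k l, (∑ j, z k j * z l j) = if k = l then 1 else 0)
    (X : EuclideanSpace ℝ (Fin J × Fin K))
    (hX : ∀ p : Fin J × Fin K, X p = ∑ k, σ k * y k p.1 * z k p.2)
    (x : EuclideanSpace ℝ (Fin J × Fin K))
    (hx : x ∈ Submodule.span ℝ (Set.range (fun r : Fin R =>
      (WithLp.toLp 2 (fun p => Bm p.1 r * Cm p.2 r) : EuclideanSpace ℝ (Fin J × Fin K))))) :
    ⟪X, x⟫_ℝ ^ 2 ≤ (∑ k ∈ Finset.univ.filter (fun k : Fin (min J K) => (k : ℕ) < R), σ k ^ 2)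
      * ‖x‖ ^ 2 := by
  classical
  set EJ := EuclideanSpace ℝ (Fin J)
  set G : Fin R → EuclideanSpace ℝ (Fin J × Fin K) :=
    fun r => (WithLp.toLp 2 (fun p => Bm p.1 r * Cm p.2 r) : EuclideanSpace ℝ (Fin J × Fin K)) with hG
  set bv : Fin R → EJ := fun r => (WithLp.toLp 2 (fun j => Bm j r) : EJ) with hbv
  set U : Submodule ℝ EJ := Submodule.span ℝ (Set.range bv) with hU
  set yE : Fin (min J K) → EJ := fun k => (WithLp.toLp 2 (fun j => y k j) : EJ) with hyE
  set Qy : Fin (min J K) → EJ := fun k => (Submodule.orthogonalProjectionOnto U (yE k) : EJ) with hQy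
  set X' : EuclideanSpace ℝ (Fin J × Fin K) :=
    (WithLp.toLp 2 (fun p => ∑ k, (σ k * Qy k p.1) * z k p.2) : EuclideanSpace ℝ (Fin J × Fin K)) with hX'
  obtain ⟨c, hc⟩ := (Submodule.mem_span_range_iff_exists_fun ℝ).1 hx
  -- Step 1: ⟪X, x⟫ = ⟪X', x⟫
  have hXw : ∀ r, ⟪X, G r⟫_ℝ = ⟪X', G r⟫_ℝ := by
    intro r
    rw [einner_eq, einner_eq]
    have e1 : ∑ p : Fin J × Fin K, X p * G r p
        = ∑ k, (∑ j, (σ k * y k j) * Bm j r) * (∑ k', z k k' * Cm k' r) := by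
      calc ∑ p : Fin J × Fin K, X p * G r p
          = ∑ p : Fin J × Fin K, (∑ k, (σ k * y k p.1) * z k p.2) * (Bm p.1 r * Cm p.2 r) :=
            Finset.sum_congr rfl fun p _ => by rw [hX p]
        _ = _ := sep_inner_one (fun k j => σ k * y k j) z (fun j => Bm j r) (fun k' => Cm k' r)
    have e2 : ∑ p : Fin J × Fin K, X' p * G r p
        = ∑ k, (∑ j, (σ k * Qy k j) * Bm j r) * (∑ k', z k k' * Cm k' r) :=
      sep_inner_one (fun k j => σ k * Qy k j) z (fun j => Bm j r) (fun k' => Cm k' r)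
    rw [e1, e2]
    refine Finset.sum_congr rfl fun k _ => ?_
    congr 1
    have hb : bv r ∈ U := Submodule.subset_span ⟨r, rfl⟩
    have h1 : ⟪bv r, Qy k⟫_ℝ = ⟪bv r, yE k⟫_ℝ := inner_proj_of_mem U (yE k) (bv r) hb
    rw [einner_eq, einner_eq] at h1
    have h2 : ∑ j, (σ k * y k j) * Bm j r = σ k * ∑ j, Bm j r * y k j := by
      rw [Finset.mul_sum]; exact Finset.sum_congr rfl fun j _ => by ring
    have h3 : ∑ j, (σ k * Qy k j) * Bm j r = σ k * ∑ j, Bm j r * Qy k j := by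
      rw [Finset.mul_sum]; exact Finset.sum_congr rfl fun j _ => by ring
    rw [h2, h3, h1]
  have hinner_eq : ⟪X, x⟫_ℝ = ⟪X', x⟫_ℝ := by
    rw [← hc, inner_sum, inner_sum]
    simp only [real_inner_smul_right]
    exact Finset.sum_congr rfl fun r _ => by rw [hXw r]
  -- Step 2: ‖X'‖² = ∑ σ² ‖Qy‖²
  have hX'sq : ⟪X', X'⟫_ℝ = ∑ k, σ k ^ 2 * ‖Qy k‖ ^ 2 := by
    rw [einner_eq]
    have e3 : ∑ p : Fin J × Fin K, X' p * X' p
        = ∑ l, ∑ k, (∑ j, (σ k * Qy k j) * (σ l * Qy l j)) * (∑ k', z k k' * z l k') :=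
      sep_inner2 (fun k j => σ k * Qy k j) z (fun k j => σ k * Qy k j) z
    rw [e3]
    have e4 : ∀ l, ∑ k, (∑ j, (σ k * Qy k j) * (σ l * Qy l j)) * (∑ k', z k k' * z l k')
        = σ l ^ 2 * ‖Qy l‖ ^ 2 := by
      intro l
      have : ∀ k, (∑ j, (σ k * Qy k j) * (σ l * Qy l j)) * (∑ k', z k k' * z l k')
          = if k = l then (∑ j, (σ k * Qy k j) * (σ l * Qy l j)) else 0 := by
        intro k
        rw [hz k l]
        by_cases h : k = l <;> simp [h]
      rw [Finset.sum_congr rfl fun k _ => this k, Finset.sum_ite_eq' Finset.univ l _]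
      simp only [Finset.mem_univ, if_true]
      have : ∑ j, (σ l * Qy l j) * (σ l * Qy l j) = σ l ^ 2 * ∑ j, Qy l j * Qy l j := by
        rw [Finset.mul_sum]; exact Finset.sum_congr rfl fun j _ => by ring
      rw [this, ← einner_eq (Qy l) (Qy l), real_inner_self_eq_norm_sq]
    exact Finset.sum_congr rfl fun l _ => e4 l
  -- Step 3: bounds on t k = ‖Qy k‖²
  have hynorm : ∀ k, ‖yE k‖ ^ 2 = 1 := by
    intro k
    have := real_inner_self_eq_norm_sq (yE k)
    rw [einner_eq] at this
    rw [← this]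
    simpa using hy k k
  have ht1 : ∀ k, ‖Qy k‖ ^ 2 ≤ 1 := by
    intro k
    have hp := pythagoras_proj U (yE k)
    have := hynorm k
    nlinarith [sq_nonneg ‖yE k - (Submodule.orthogonalProjectionOnto U (yE k) : EJ)‖]
  have hfin : finrank ℝ U ≤ R := by
    simpa [Set.finrank] using finrank_range_le_card (R := ℝ) bv
  have hbessel : ∀ s : Fin (finrank ℝ U),
      ∑ k, ⟪((stdOrthonormalBasis ℝ U) s : EJ), yE k⟫_ℝ ^ 2 ≤ 1 := by
    intro s
    have hon : Orthonormal ℝ yE := by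
      rw [orthonormal_iff_ite]
      intro k l
      rw [einner_eq]
      exact_mod_cast hy k l
    have hb := hon.sum_inner_products_le (𝕜 := ℝ) ((stdOrthonormalBasis ℝ U) s : EJ)
      (s := Finset.univ)
    have hnu : ‖((stdOrthonormalBasis ℝ U) s : EJ)‖ = 1 := by
      rw [Submodule.norm_coe]
      exact (stdOrthonormalBasis ℝ U).orthonormal.1 s
    calc ∑ k, ⟪((stdOrthonormalBasis ℝ U) s : EJ), yE k⟫_ℝ ^ 2
        = ∑ k, ‖⟪yE k, ((stdOrthonormalBasis ℝ U) s : EJ)⟫_ℝ‖ ^ 2 := by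
          refine Finset.sum_congr rfl fun k _ => ?_
          rw [Real.norm_eq_abs, sq_abs, real_inner_comm]
      _ ≤ ‖((stdOrthonormalBasis ℝ U) s : EJ)‖ ^ 2 := hb
      _ = 1 := by rw [hnu]; norm_num
  have htsum : ∑ k, ‖Qy k‖ ^ 2 ≤ (R : ℝ) := by
    have e5 : ∀ k, ‖Qy k‖ ^ 2 = ∑ s, ⟪((stdOrthonormalBasis ℝ U) s : EJ), yE k⟫_ℝ ^ 2 :=
      fun k => proj_sq_sum U (yE k)
    calc ∑ k, ‖Qy k‖ ^ 2
        = ∑ s, ∑ k, ⟪((stdOrthonormalBasis ℝ U) s : EJ), yE k⟫_ℝ ^ 2 := by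
          rw [← Finset.sum_comm]
          exact Finset.sum_congr rfl fun k _ => e5 k
      _ ≤ ∑ s : Fin (finrank ℝ U), (1 : ℝ) := Finset.sum_le_sum fun s _ => hbessel s
      _ = (finrank ℝ U : ℝ) := by simp
      _ ≤ (R : ℝ) := by exact_mod_cast hfin
  have hA := lemA hR σ hanti hnn (fun k => ‖Qy k‖ ^ 2) (fun k => sq_nonneg _) ht1 htsum
  -- Conclusion
  have hCS := real_inner_mul_inner_self_le X' x
  calc ⟪X, x⟫_ℝ ^ 2 = ⟪X', x⟫_ℝ * ⟪X', x⟫_ℝ := by rw [hinner_eq, sq]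
    _ ≤ ⟪X', X'⟫_ℝ * ⟪x, x⟫_ℝ := hCS
    _ ≤ (∑ k ∈ Finset.univ.filter (fun k : Fin (min J K) => (k : ℕ) < R), σ k ^ 2) * ‖x‖ ^ 2 := by
        rw [real_inner_self_eq_norm_sq x]
        refine mul_le_mul_of_nonneg_right ?_ (sq_nonneg _)
        rw [hX'sq]
        exact hA

lemma Mpair {I J K : ℕ} (T : Fin I → Fin J → Fin K → ℝ) (lam : Fin (J * K) → ℝ)
    (v : Fin (J * K) → (Fin J × Fin K) → ℝ)
    (hM : ∀ p q, Mmat T p q = ∑ i, lam i * v i p * v i q)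
    (x w : (Fin J × Fin K) → ℝ) :
    ∑ i, (∑ p, T i p.1 p.2 * x p) * (∑ p, T i p.1 p.2 * w p)
      = ∑ j, lam j * ((∑ p, v j p * x p) * (∑ p, v j p * w p)) := by
  have key : ∀ p q : Fin J × Fin K, ∑ i, (T i p.1 p.2 * x p) * (T i q.1 q.2 * w q)
      = ∑ j, lam j * ((v j p * x p) * (v j q * w q)) := by
    intro p q
    have h1 : ∑ i, (T i p.1 p.2 * x p) * (T i q.1 q.2 * w q)
        = (∑ i, T i p.1 p.2 * T i q.1 q.2) * (x p * w q) := by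
      rw [Finset.sum_mul]; exact Finset.sum_congr rfl fun i _ => by ring
    have h2 : (∑ i, T i p.1 p.2 * T i q.1 q.2) = ∑ j, lam j * v j p * v j q := hM p q
    rw [h1, h2, Finset.sum_mul]
    exact Finset.sum_congr rfl fun j _ => by ring
  calc ∑ i, (∑ p, T i p.1 p.2 * x p) * (∑ p, T i p.1 p.2 * w p)
      = ∑ i, ∑ p : Fin J × Fin K, ∑ q : Fin J × Fin K,
          (T i p.1 p.2 * x p) * (T i q.1 q.2 * w q) := by
        refine Finset.sum_congr rfl fun i _ => ?_
        rw [Finset.sum_mul_sum]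
    _ = ∑ p : Fin J × Fin K, ∑ i, ∑ q : Fin J × Fin K,
          (T i p.1 p.2 * x p) * (T i q.1 q.2 * w q) := Finset.sum_comm
    _ = ∑ p : Fin J × Fin K, ∑ q : Fin J × Fin K, ∑ i,
          (T i p.1 p.2 * x p) * (T i q.1 q.2 * w q) :=
        Finset.sum_congr rfl fun p _ => Finset.sum_comm
    _ = ∑ p : Fin J × Fin K, ∑ q : Fin J × Fin K, ∑ j,
          lam j * ((v j p * x p) * (v j q * w q)) :=
        Finset.sum_congr rfl fun p _ => Finset.sum_congr rfl fun q _ => key p q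
    _ = ∑ p : Fin J × Fin K, ∑ j, ∑ q : Fin J × Fin K,
          lam j * ((v j p * x p) * (v j q * w q)) :=
        Finset.sum_congr rfl fun p _ => Finset.sum_comm
    _ = ∑ j, ∑ p : Fin J × Fin K, ∑ q : Fin J × Fin K,
          lam j * ((v j p * x p) * (v j q * w q)) := Finset.sum_comm
    _ = ∑ j, lam j * ((∑ p, v j p * x p) * (∑ p, v j p * w p)) := by
        refine Finset.sum_congr rfl fun j _ => ?_
        rw [Finset.sum_mul_sum, Finset.mul_sum]
        refine Finset.sum_congr rfl fun p _ => ?_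
        rw [Finset.mul_sum]

-- sum evaluation in EuclideanSpace
lemma esum_apply {ι κ : Type*} [Fintype ι] [Fintype κ] (f : κ → EuclideanSpace ℝ ι) (p : ι) :
    (∑ r, f r) p = ∑ r, f r p := by
  rw [WithLp.ofLp_sum]
  exact Finset.sum_apply p Finset.univ _

lemma esub_apply {ι : Type*} [Fintype ι] (f g : EuclideanSpace ℝ ι) (p : ι) :
    (f - g) p = f p - g p := rfl

lemma esmul_apply {ι : Type*} [Fintype ι] (c : ℝ) (f : EuclideanSpace ℝ ι) (p : ι) :
    (c • f) p = c * f p := rfl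

set_option maxHeartbeats 1000000 in
lemma lemL1 {I J K R : ℕ} (hRmin : R ≤ min J K)
    (T : Fin I → Fin J → Fin K → ℝ)
    (lam : Fin (J * K) → ℝ) (v : Fin (J * K) → (Fin J × Fin K) → ℝ)
    (hlam : ∀ i, 0 ≤ lam i)
    (hM : ∀ p q, Mmat T p q = ∑ i, lam i * v i p * v i q)
    (σ : Fin (J * K) → Fin (min J K) → ℝ)
    (hσ : ∀ i, IsSingularValues (Vbar v i) (σ i))
    (A : Matrix (Fin I) (Fin R) ℝ) (Bm : Matrix (Fin J) (Fin R) ℝ)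
    (Cm : Matrix (Fin K) (Fin R) ℝ) :
    (1 / 2) * (∑ i, ∑ j, ∑ k, T i j k ^ 2)
      - (1 / 2) * (∑ i, lam i *
          ∑ k ∈ Finset.univ.filter (fun k : Fin (min J K) => (k : ℕ) < R), σ i k ^ 2)
      ≤ Jfun T A Bm Cm := by
  classical
  set E := EuclideanSpace ℝ (Fin J × Fin K) with hE
  set G : Fin R → E := fun r => (WithLp.toLp 2 (fun p => Bm p.1 r * Cm p.2 r) : E) with hG
  set W : Submodule ℝ E := Submodule.span ℝ (Set.range G) with hW
  set Ti : Fin I → E := fun i => (WithLp.toLp 2 (fun p => T i p.1 p.2) : E) with hTi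
  set Si : Fin I → E := fun i => ∑ r, A i r • G r with hSi
  have hSiW : ∀ i, Si i ∈ W := by
    intro i
    rw [hSi, hW]
    exact Submodule.sum_mem _ fun r _ =>
      Submodule.smul_mem _ _ (Submodule.subset_span ⟨r, rfl⟩)
  have hSip : ∀ i p, Si i p = ∑ r, A i r * (Bm p.1 r * Cm p.2 r) := by
    intro i p
    show (∑ r, A i r • G r) p = _
    rw [esum_apply]
    exact Finset.sum_congr rfl fun r _ => rfl
  -- Jfun as sum of squared norms
  have hJ : Jfun T A Bm Cm = (1 / 2) * ∑ i, ‖Ti i - Si i‖ ^ 2 := by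
    unfold Jfun
    congr 1
    refine Finset.sum_congr rfl fun i _ => ?_
    have h1 : ‖Ti i - Si i‖ ^ 2 = ∑ p : Fin J × Fin K, (Ti i p - Si i p) ^ 2 := by
      rw [← real_inner_self_eq_norm_sq, einner_eq]
      exact Finset.sum_congr rfl fun p _ => (sq _).symm
    rw [h1, Fintype.sum_prod_type]
    refine Finset.sum_congr rfl fun j _ => Finset.sum_congr rfl fun k _ => ?_
    rw [hSip i (j, k)]
    congr 2
    exact Finset.sum_congr rfl fun r _ => (mul_assoc _ _ _)
  -- pointwise lower bound via projection
  have hPle : ∀ i, ‖Ti i‖ ^ 2 - ‖(Submodule.orthogonalProjectionOnto W (Ti i) : E)‖ ^ 2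
      ≤ ‖Ti i - Si i‖ ^ 2 := by
    intro i
    have hp := pythagoras_proj W (Ti i)
    have horth : ⟪Ti i - (Submodule.orthogonalProjectionOnto W (Ti i) : E),
        (Submodule.orthogonalProjectionOnto W (Ti i) : E) - Si i⟫_ℝ = 0 :=
      Submodule.starProjection_inner_eq_zero (Ti i) _
        (Submodule.sub_mem _ (Submodule.orthogonalProjectionOnto W (Ti i)).2 (hSiW i))
    have hdecomp : Ti i - Si i = (Ti i - (Submodule.orthogonalProjectionOnto W (Ti i) : E))
        + ((Submodule.orthogonalProjectionOnto W (Ti i) : E) - Si i) := by abel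
    have hnorm := norm_add_sq_real (Ti i - (Submodule.orthogonalProjectionOnto W (Ti i) : E))
      ((Submodule.orthogonalProjectionOnto W (Ti i) : E) - Si i)
    rw [← hdecomp, horth] at hnorm
    nlinarith [sq_nonneg ‖(Submodule.orthogonalProjectionOnto W (Ti i) : E) - Si i‖]
  -- sum of squared norms of T slices
  have hTn : ∀ i, ‖Ti i‖ ^ 2 = ∑ j, ∑ k, T i j k ^ 2 := by
    intro i
    rw [← real_inner_self_eq_norm_sq, einner_eq, Fintype.sum_prod_type]
    exact Finset.sum_congr rfl fun j _ => Finset.sum_congr rfl fun k _ => (sq _).symm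
  -- the projection mass bound
  have hmass : ∑ i, ‖(Submodule.orthogonalProjectionOnto W (Ti i) : E)‖ ^ 2
      ≤ ∑ jj, lam jj *
          ∑ k ∈ Finset.univ.filter (fun k : Fin (min J K) => (k : ℕ) < R), σ jj k ^ 2 := by
    have hMs : ∀ s, ∑ i, ⟪((stdOrthonormalBasis ℝ W) s : E), Ti i⟫_ℝ ^ 2
        = ∑ jj, lam jj * (∑ p, v jj p * ((stdOrthonormalBasis ℝ W) s : E) p) ^ 2 := by
      intro s
      have hmp := Mpair T lam v hM (fun p => ((stdOrthonormalBasis ℝ W) s : E) p)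
        (fun p => ((stdOrthonormalBasis ℝ W) s : E) p)
      calc ∑ i, ⟪((stdOrthonormalBasis ℝ W) s : E), Ti i⟫_ℝ ^ 2
          = ∑ i, (∑ p, T i p.1 p.2 * ((stdOrthonormalBasis ℝ W) s : E) p)
              * (∑ p, T i p.1 p.2 * ((stdOrthonormalBasis ℝ W) s : E) p) := by
            refine Finset.sum_congr rfl fun i _ => ?_
            rw [einner_eq, sq]
            congr 1 <;> exact Finset.sum_congr rfl fun p _ => (mul_comm _ _)
        _ = ∑ jj, lam jj * ((∑ p, v jj p * ((stdOrthonormalBasis ℝ W) s : E) p)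
              * (∑ p, v jj p * ((stdOrthonormalBasis ℝ W) s : E) p)) := hmp
        _ = _ := Finset.sum_congr rfl fun jj _ => by rw [sq]
    -- per eigenvector bound
    have hvb : ∀ jj : Fin (J * K),
        ∑ s, (∑ p, v jj p * ((stdOrthonormalBasis ℝ W) s : E) p) ^ 2
          ≤ ∑ k ∈ Finset.univ.filter (fun k : Fin (min J K) => (k : ℕ) < R), σ jj k ^ 2 := by
      intro jj
      set vE : E := (WithLp.toLp 2 (fun p => v jj p) : E) with hvE
      have h1 : ∑ s, (∑ p, v jj p * ((stdOrthonormalBasis ℝ W) s : E) p) ^ 2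
          = ‖(Submodule.orthogonalProjectionOnto W vE : E)‖ ^ 2 := by
        rw [proj_sq_sum W vE]
        refine Finset.sum_congr rfl fun s _ => ?_
        rw [einner_eq]
        congr 1
        exact Finset.sum_congr rfl fun p _ => (mul_comm _ _)
      rw [h1]
      obtain ⟨hanti, hnn, yv, zv, hyv, hzv, hXv⟩ := hσ jj
      have hXp : ∀ p : Fin J × Fin K, vE p = ∑ k, σ jj k * yv k p.1 * zv k p.2 := by
        intro p
        have := hXv p.1 p.2
        simpa [Vbar] using this
      have hB := lemB hRmin Bm Cm (σ jj) hanti hnn yv zv hyv hzv vE hXp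
        ((Submodule.orthogonalProjectionOnto W vE : E)) (Submodule.orthogonalProjectionOnto W vE).2
      rw [inner_proj_eq_normsq W vE] at hB
      set q : ℝ := ‖(Submodule.orthogonalProjectionOnto W vE : E)‖ ^ 2 with hq
      have hq0 : 0 ≤ q := sq_nonneg _
      set S : ℝ := ∑ k ∈ Finset.univ.filter (fun k : Fin (min J K) => (k : ℕ) < R), σ jj k ^ 2
        with hS
      have hS0 : 0 ≤ S := Finset.sum_nonneg fun k _ => sq_nonneg _
      nlinarith
    calc ∑ i, ‖(Submodule.orthogonalProjectionOnto W (Ti i) : E)‖ ^ 2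
        = ∑ i, ∑ s, ⟪((stdOrthonormalBasis ℝ W) s : E), Ti i⟫_ℝ ^ 2 :=
          Finset.sum_congr rfl fun i _ => proj_sq_sum W (Ti i)
      _ = ∑ s, ∑ i, ⟪((stdOrthonormalBasis ℝ W) s : E), Ti i⟫_ℝ ^ 2 := Finset.sum_comm
      _ = ∑ s, ∑ jj, lam jj * (∑ p, v jj p * ((stdOrthonormalBasis ℝ W) s : E) p) ^ 2 :=
          Finset.sum_congr rfl fun s _ => hMs s
      _ = ∑ jj, ∑ s, lam jj * (∑ p, v jj p * ((stdOrthonormalBasis ℝ W) s : E) p) ^ 2 :=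
          Finset.sum_comm
      _ = ∑ jj, lam jj * ∑ s, (∑ p, v jj p * ((stdOrthonormalBasis ℝ W) s : E) p) ^ 2 := by
          refine Finset.sum_congr rfl fun jj _ => ?_
          rw [Finset.mul_sum]
      _ ≤ _ := Finset.sum_le_sum fun jj _ =>
          mul_le_mul_of_nonneg_left (hvb jj) (hlam jj)
  -- assemble
  rw [hJ]
  have h2 : ∑ i, (‖Ti i‖ ^ 2 - ‖(Submodule.orthogonalProjectionOnto W (Ti i) : E)‖ ^ 2)
      ≤ ∑ i, ‖Ti i - Si i‖ ^ 2 := Finset.sum_le_sum fun i _ => hPle i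
  rw [Finset.sum_sub_distrib] at h2
  have h3 : ∑ i, ‖Ti i‖ ^ 2 = ∑ i, ∑ j, ∑ k, T i j k ^ 2 :=
    Finset.sum_congr rfl fun i _ => hTn i
  linarith [hmass]

set_option maxHeartbeats 1000000 in
lemma lemL2 {I J K R : ℕ} (hRmin : R ≤ min J K)
    (T : Fin I → Fin J → Fin K → ℝ)
    (lam : Fin (J * K) → ℝ) (v : Fin (J * K) → (Fin J × Fin K) → ℝ)
    (hlam : ∀ i, 0 ≤ lam i)
    (hM : ∀ p q, Mmat T p q = ∑ i, lam i * v i p * v i q)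
    (hΛ : 0 < ∑ i, lam i)
    (σC : Fin (min J K) → ℝ) (y : Fin (min J K) → Fin J → ℝ)
    (z : Fin (min J K) → Fin K → ℝ)
    (hy : ∀ k l, (∑ j, y k j * y l j) = if k = l then 1 else 0)
    (hz : ∀ k l, (∑ j, z k j * z l j) = if k = l then 1 else 0)
    (hSVD : ∀ j k, centroid lam v j k = ∑ k', σC k' * y k' j * z k' k) :
    Jfun T (Matrix.of fun i (r : Fin R) => ∑ j, ∑ k,
        T i j k * y ⟨r, lt_of_lt_of_le r.2 hRmin⟩ j * z ⟨r, lt_of_lt_of_le r.2 hRmin⟩ k)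
      (Matrix.of fun j (r : Fin R) => y ⟨r, lt_of_lt_of_le r.2 hRmin⟩ j)
      (Matrix.of fun k (r : Fin R) => z ⟨r, lt_of_lt_of_le r.2 hRmin⟩ k)
      ≤ (1 / 2) * (∑ i, ∑ j, ∑ k, T i j k ^ 2)
        - (1 / 2) * ((∑ i, lam i) *
            ∑ k ∈ Finset.univ.filter (fun k : Fin (min J K) => (k : ℕ) < R), σC k ^ 2) := by
  classical
  set rr : Fin R → Fin (min J K) := fun r => ⟨r, lt_of_lt_of_le r.2 hRmin⟩ with hrr
  set u : Fin R → EuclideanSpace ℝ (Fin J × Fin K) :=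
    fun r => (WithLp.toLp 2 (fun p => y (rr r) p.1 * z (rr r) p.2) : EuclideanSpace ℝ (Fin J × Fin K)) with hu
  set Ti : Fin I → EuclideanSpace ℝ (Fin J × Fin K) :=
    fun i => (WithLp.toLp 2 (fun p => T i p.1 p.2) : EuclideanSpace ℝ (Fin J × Fin K)) with hTi
  set A0 : Fin I → Fin R → ℝ := fun i r => ⟪Ti i, u r⟫_ℝ with hA0
  have hrr_inj : Function.Injective rr := by
    intro a b h
    have hv : (rr a).val = (rr b).val := by rw [h]
    exact Fin.ext hv
  have hu_on : ∀ r r', ⟪u r, u r'⟫_ℝ = if r = r' then 1 else 0 := by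
    intro r r'
    rw [einner_eq]
    rw [show ∑ p : Fin J × Fin K, u r p * u r' p
        = ∑ p : Fin J × Fin K, (y (rr r) p.1 * z (rr r) p.2) * (y (rr r') p.1 * z (rr r') p.2)
      from rfl]
    rw [sep_dot (y (rr r)) (y (rr r')) (z (rr r)) (z (rr r')), hy, hz]
    by_cases h : r = r'
    · simp [h]
    · have hne : ¬ rr r = rr r' := fun hh => h (hrr_inj hh)
      simp [hne, h]
  have hA0eq : ∀ i r, A0 i r = ∑ j, ∑ k, T i j k * y (rr r) j * z (rr r) k := by
    intro i r
    rw [show A0 i r = ⟪Ti i, u r⟫_ℝ from rfl, einner_eq, Fintype.sum_prod_type]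
    refine Finset.sum_congr rfl fun j _ => Finset.sum_congr rfl fun k _ => ?_
    exact (mul_assoc _ _ _).symm
  -- per-slice identity
  have hper : ∀ i, ∑ j, ∑ k, (T i j k - ∑ r, A0 i r * y (rr r) j * z (rr r) k) ^ 2
      = ‖Ti i‖ ^ 2 - ∑ r, A0 i r ^ 2 := by
    intro i
    set s : EuclideanSpace ℝ (Fin J × Fin K) := ∑ r, A0 i r • u r with hs
    have hsp : ∀ p, s p = ∑ r, A0 i r * u r p := by
      intro p
      rw [hs, esum_apply]
      exact Finset.sum_congr rfl fun r _ => rfl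
    have h1 : ∑ j, ∑ k, (T i j k - ∑ r, A0 i r * y (rr r) j * z (rr r) k) ^ 2
        = ‖Ti i - s‖ ^ 2 := by
      rw [← real_inner_self_eq_norm_sq, einner_eq, Fintype.sum_prod_type]
      refine Finset.sum_congr rfl fun j _ => Finset.sum_congr rfl fun k _ => ?_
      have e : (Ti i - s) (j, k) = T i j k - ∑ r, A0 i r * y (rr r) j * z (rr r) k := by
        show Ti i (j, k) - s (j, k) = _
        rw [hsp (j, k)]
        congr 1
        exact Finset.sum_congr rfl fun r _ => (mul_assoc _ _ _).symm
      rw [← e]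
      exact sq _
    have h2 : ⟪Ti i, s⟫_ℝ = ∑ r, A0 i r ^ 2 := by
      rw [hs, inner_sum]
      simp only [real_inner_smul_right]
      exact Finset.sum_congr rfl fun r _ => by
        rw [show ⟪Ti i, u r⟫_ℝ = A0 i r from rfl, sq]
    have h3 : ⟪s, s⟫_ℝ = ∑ r, A0 i r ^ 2 := by
      rw [hs, sum_inner]
      refine Finset.sum_congr rfl fun r _ => ?_
      rw [real_inner_smul_left, inner_sum]
      simp only [real_inner_smul_right]
      have e2 : ∀ r', A0 i r' * ⟪u r, u r'⟫_ℝ = if r' = r then A0 i r else 0 := by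
        intro r'
        rw [hu_on r r']
        rcases eq_or_ne r r' with h | h
        · subst h; simp
        · rw [if_neg h, mul_zero, if_neg (Ne.symm h)]
      rw [Finset.sum_congr rfl fun r' _ => e2 r', Finset.sum_ite_eq' Finset.univ r _]
      simp [sq]
    rw [h1, norm_sub_sq_real, h2, ← real_inner_self_eq_norm_sq s, h3]
    ring
  -- rewrite Jfun
  have hJ : Jfun T (Matrix.of fun i (r : Fin R) => ∑ j, ∑ k,
        T i j k * y (rr r) j * z (rr r) k)
      (Matrix.of fun j (r : Fin R) => y (rr r) j)
      (Matrix.of fun k (r : Fin R) => z (rr r) k)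
      = (1 / 2) * ∑ i, (‖Ti i‖ ^ 2 - ∑ r, A0 i r ^ 2) := by
    unfold Jfun
    congr 1
    refine Finset.sum_congr rfl fun i _ => ?_
    rw [← hper i]
    refine Finset.sum_congr rfl fun j _ => Finset.sum_congr rfl fun k _ => ?_
    congr 2
    refine Finset.sum_congr rfl fun r _ => ?_
    rw [show (Matrix.of fun i (r : Fin R) => ∑ j, ∑ k,
        T i j k * y (rr r) j * z (rr r) k) i r = ∑ j, ∑ k, T i j k * y (rr r) j * z (rr r) k
      from rfl, ← hA0eq i r]
    rfl
  -- per-column mass lower bound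
  have hMr : ∀ r, (∑ i0, lam i0) * σC (rr r) ^ 2 ≤ ∑ i, A0 i r ^ 2 := by
    intro r
    have h4 : ∑ i, A0 i r ^ 2 = ∑ jj, lam jj * (∑ p, v jj p * u r p) ^ 2 := by
      have hmp := Mpair T lam v hM (fun p => u r p) (fun p => u r p)
      calc ∑ i, A0 i r ^ 2
          = ∑ i, (∑ p, T i p.1 p.2 * u r p) * (∑ p, T i p.1 p.2 * u r p) := by
            refine Finset.sum_congr rfl fun i _ => ?_
            rw [show A0 i r = ⟪Ti i, u r⟫_ℝ from rfl, einner_eq, sq]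
        _ = ∑ jj, lam jj * ((∑ p, v jj p * u r p) * (∑ p, v jj p * u r p)) := hmp
        _ = _ := Finset.sum_congr rfl fun jj _ => by rw [sq]
    have h6 : ∀ p : Fin J × Fin K, ∑ jj, lam jj * v jj p
        = (∑ i0, lam i0) * centroid lam v p.1 p.2 := by
      intro p
      unfold _root_.centroid
      rw [Matrix.smul_apply, Matrix.sum_apply]
      have : ∀ jj, (lam jj • Vbar v jj) p.1 p.2 = lam jj * v jj p := by
        intro jj
        rw [Matrix.smul_apply]
        rfl
      rw [Finset.sum_congr rfl fun jj _ => this jj, smul_eq_mul, ← mul_assoc,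
        mul_inv_cancel₀ (ne_of_gt hΛ), one_mul]
    have h7 : ∑ p : Fin J × Fin K, centroid lam v p.1 p.2 * u r p = σC (rr r) := by
      calc ∑ p : Fin J × Fin K, centroid lam v p.1 p.2 * u r p
          = ∑ p : Fin J × Fin K, (∑ k', (σC k' * y k' p.1) * z k' p.2)
              * (y (rr r) p.1 * z (rr r) p.2) := by
            refine Finset.sum_congr rfl fun p _ => ?_
            rw [hSVD p.1 p.2]
        _ = ∑ k', (∑ j, (σC k' * y k' j) * y (rr r) j) * (∑ k'', z k' k'' * z (rr r) k'') :=
            sep_inner_one (fun k' j => σC k' * y k' j) z (y (rr r)) (z (rr r))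
        _ = σC (rr r) := by
            have e3 : ∀ k', (∑ j, (σC k' * y k' j) * y (rr r) j)
                * (∑ k'', z k' k'' * z (rr r) k'')
                = if k' = rr r then σC (rr r) else 0 := by
              intro k'
              have e1 : ∑ j, (σC k' * y k' j) * y (rr r) j
                  = σC k' * ∑ j, y k' j * y (rr r) j := by
                rw [Finset.mul_sum]
                exact Finset.sum_congr rfl fun j _ => by ring
              rw [e1, hy k' (rr r), hz k' (rr r)]
              by_cases h : k' = rr r
              · subst h; simp
              · simp [h]
            rw [Finset.sum_congr rfl fun k' _ => e3 k', Finset.sum_ite_eq' Finset.univ (rr r) _]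
            simp
    have h5 : ∑ jj, lam jj * (∑ p, v jj p * u r p) = (∑ i0, lam i0) * σC (rr r) := by
      calc ∑ jj, lam jj * (∑ p, v jj p * u r p)
          = ∑ jj, ∑ p : Fin J × Fin K, lam jj * (v jj p * u r p) := by
            refine Finset.sum_congr rfl fun jj _ => ?_
            rw [Finset.mul_sum]
        _ = ∑ p : Fin J × Fin K, ∑ jj, lam jj * (v jj p * u r p) := Finset.sum_comm
        _ = ∑ p : Fin J × Fin K, (∑ jj, lam jj * v jj p) * u r p := by
            refine Finset.sum_congr rfl fun p _ => ?_
            rw [Finset.sum_mul]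
            exact Finset.sum_congr rfl fun jj _ => by ring
        _ = ∑ p : Fin J × Fin K, ((∑ i0, lam i0) * centroid lam v p.1 p.2) * u r p :=
            Finset.sum_congr rfl fun p _ => by rw [h6 p]
        _ = (∑ i0, lam i0) * ∑ p : Fin J × Fin K, centroid lam v p.1 p.2 * u r p := by
            rw [Finset.mul_sum]
            exact Finset.sum_congr rfl fun p _ => by ring
        _ = (∑ i0, lam i0) * σC (rr r) := by rw [h7]
    have hcs := Finset.sum_mul_sq_le_sq_mul_sq Finset.univ (fun jj => Real.sqrt (lam jj))
      (fun jj => Real.sqrt (lam jj) * (∑ p, v jj p * u r p))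
    have e8 : ∀ jj : Fin (J * K), Real.sqrt (lam jj)
        * (Real.sqrt (lam jj) * (∑ p, v jj p * u r p)) = lam jj * (∑ p, v jj p * u r p) :=
      fun jj => by rw [← mul_assoc, Real.mul_self_sqrt (hlam jj)]
    have e9 : ∀ jj : Fin (J * K), Real.sqrt (lam jj) ^ 2 = lam jj :=
      fun jj => Real.sq_sqrt (hlam jj)
    have e10 : ∀ jj : Fin (J * K), (Real.sqrt (lam jj) * (∑ p, v jj p * u r p)) ^ 2
        = lam jj * (∑ p, v jj p * u r p) ^ 2 :=
      fun jj => by rw [mul_pow, e9 jj]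
    rw [Finset.sum_congr rfl fun jj _ => e8 jj, Finset.sum_congr rfl fun jj _ => e9 jj,
      Finset.sum_congr rfl fun jj _ => e10 jj, h5] at hcs
    rw [h4]
    nlinarith [hΛ, sq_nonneg (σC (rr r))]
  -- assemble
  rw [hJ, Finset.sum_sub_distrib]
  have hTn : ∑ i, ‖Ti i‖ ^ 2 = ∑ i, ∑ j, ∑ k, T i j k ^ 2 := by
    refine Finset.sum_congr rfl fun i _ => ?_
    rw [← real_inner_self_eq_norm_sq, einner_eq, Fintype.sum_prod_type]
    exact Finset.sum_congr rfl fun j _ => Finset.sum_congr rfl fun k _ => (sq _).symm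
  have hmass : (∑ i0, lam i0) *
      (∑ k ∈ Finset.univ.filter (fun k : Fin (min J K) => (k : ℕ) < R), σC k ^ 2)
      ≤ ∑ i, ∑ r, A0 i r ^ 2 := by
    rw [Finset.sum_comm, sum_filter_lt hRmin (fun k => σC k ^ 2), Finset.mul_sum]
    exact Finset.sum_le_sum fun r _ => hMr r
  rw [hTn]
  linarith

set_option maxHeartbeats 2000000 in
/-- A-posteriori bound for the Centroid Projection: if `B_C`, `C_C` consist of the top `R`
left/right singular vectors of the centroid `V̄^C` (with SVD data `σC, y, z`), then
`|𝔍_red(B_C,C_C) − inf 𝔍_red| ≤ ½(∑ᵢ λᵢ ∑_{k≤R} (σₖⁱ)² − Λ ∑_{k≤R} σₖ(V̄^C)²)`. -/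
theorem stmt18 (I J K R : ℕ) (hI : 0 < I) (hJ : 0 < J) (hK : 0 < K) (hR : 0 < R)
    (hRmin : R ≤ min J K)
    (T : Fin I → Fin J → Fin K → ℝ)
    (lam : Fin (J * K) → ℝ) (v : Fin (J * K) → (Fin J × Fin K) → ℝ)
    (hvorth : ∀ i i', (∑ p, v i p * v i' p) = if i = i' then 1 else 0)
    (hlam : ∀ i, 0 ≤ lam i)
    (hM : ∀ p q, Mmat T p q = ∑ i, lam i * v i p * v i q)
    (hΛ : 0 < ∑ i, lam i)
    (σ : Fin (J * K) → Fin (min J K) → ℝ)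
    (hσ : ∀ i, IsSingularValues (Vbar v i) (σ i))
    (σC : Fin (min J K) → ℝ) (y : Fin (min J K) → Fin J → ℝ)
    (z : Fin (min J K) → Fin K → ℝ)
    (hanti : Antitone σC) (hσCnn : ∀ k, 0 ≤ σC k)
    (hy : ∀ k l, (∑ j, y k j * y l j) = if k = l then 1 else 0)
    (hz : ∀ k l, (∑ j, z k j * z l j) = if k = l then 1 else 0)
    (hSVD : ∀ j k, centroid lam v j k = ∑ k', σC k' * y k' j * z k' k) :
    |Jred T (Matrix.of fun j (r : Fin R) => y ⟨r, lt_of_lt_of_le r.2 hRmin⟩ j)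
        (Matrix.of fun k (r : Fin R) => z ⟨r, lt_of_lt_of_le r.2 hRmin⟩ k) -
      (⨅ p : Matrix (Fin J) (Fin R) ℝ × Matrix (Fin K) (Fin R) ℝ, Jred T p.1 p.2)| ≤
    (1 / 2) * ((∑ i, lam i *
        ∑ k ∈ Finset.univ.filter (fun k : Fin (min J K) => (k : ℕ) < R), (σ i k) ^ 2) -
      (∑ i, lam i) *
        ∑ k ∈ Finset.univ.filter (fun k : Fin (min J K) => (k : ℕ) < R), (σC k) ^ 2) := by
  classical
  have hlow : ∀ (Bm : Matrix (Fin J) (Fin R) ℝ) (Cm : Matrix (Fin K) (Fin R) ℝ),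
      (1 / 2) * (∑ i, ∑ j, ∑ k, T i j k ^ 2)
        - (1 / 2) * (∑ i, lam i *
            ∑ k ∈ Finset.univ.filter (fun k : Fin (min J K) => (k : ℕ) < R), σ i k ^ 2)
        ≤ Jred T Bm Cm := fun Bm Cm =>
    le_ciInf fun A => lemL1 hRmin T lam v hlam hM σ hσ A Bm Cm
  have hup : Jred T (Matrix.of fun j (r : Fin R) => y ⟨r, lt_of_lt_of_le r.2 hRmin⟩ j)
      (Matrix.of fun k (r : Fin R) => z ⟨r, lt_of_lt_of_le r.2 hRmin⟩ k)
      ≤ (1 / 2) * (∑ i, ∑ j, ∑ k, T i j k ^ 2)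
        - (1 / 2) * ((∑ i, lam i) *
            ∑ k ∈ Finset.univ.filter (fun k : Fin (min J K) => (k : ℕ) < R), σC k ^ 2) := by
    have hbdd : BddBelow (Set.range fun A : Matrix (Fin I) (Fin R) ℝ =>
        Jfun T A (Matrix.of fun j (r : Fin R) => y ⟨r, lt_of_lt_of_le r.2 hRmin⟩ j)
          (Matrix.of fun k (r : Fin R) => z ⟨r, lt_of_lt_of_le r.2 hRmin⟩ k)) := by
      refine ⟨(1 / 2) * (∑ i, ∑ j, ∑ k, T i j k ^ 2)
        - (1 / 2) * (∑ i, lam i *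
            ∑ k ∈ Finset.univ.filter (fun k : Fin (min J K) => (k : ℕ) < R), σ i k ^ 2), ?_⟩
      rintro _ ⟨A, rfl⟩
      exact lemL1 hRmin T lam v hlam hM σ hσ A _ _
    have hle := ciInf_le hbdd (Matrix.of fun i (r : Fin R) => ∑ j, ∑ k,
        T i j k * y ⟨r, lt_of_lt_of_le r.2 hRmin⟩ j * z ⟨r, lt_of_lt_of_le r.2 hRmin⟩ k)
    exact le_trans hle (lemL2 hRmin T lam v hlam hM hΛ σC y z hy hz hSVD)
  have hpair_low : (1 / 2) * (∑ i, ∑ j, ∑ k, T i j k ^ 2)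
      - (1 / 2) * (∑ i, lam i *
          ∑ k ∈ Finset.univ.filter (fun k : Fin (min J K) => (k : ℕ) < R), σ i k ^ 2)
      ≤ ⨅ p : Matrix (Fin J) (Fin R) ℝ × Matrix (Fin K) (Fin R) ℝ, Jred T p.1 p.2 :=
    le_ciInf fun p => hlow p.1 p.2
  have hpair_le : (⨅ p : Matrix (Fin J) (Fin R) ℝ × Matrix (Fin K) (Fin R) ℝ,
        Jred T p.1 p.2)
      ≤ Jred T (Matrix.of fun j (r : Fin R) => y ⟨r, lt_of_lt_of_le r.2 hRmin⟩ j)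
        (Matrix.of fun k (r : Fin R) => z ⟨r, lt_of_lt_of_le r.2 hRmin⟩ k) := by
    have hbdd : BddBelow (Set.range fun p : Matrix (Fin J) (Fin R) ℝ × Matrix (Fin K) (Fin R) ℝ =>
        Jred T p.1 p.2) := by
      refine ⟨(1 / 2) * (∑ i, ∑ j, ∑ k, T i j k ^ 2)
        - (1 / 2) * (∑ i, lam i *
            ∑ k ∈ Finset.univ.filter (fun k : Fin (min J K) => (k : ℕ) < R), σ i k ^ 2), ?_⟩
      rintro _ ⟨p, rfl⟩
      exact hlow p.1 p.2
    exact ciInf_le hbdd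
      (⟨Matrix.of fun j (r : Fin R) => y ⟨r, lt_of_lt_of_le r.2 hRmin⟩ j,
        Matrix.of fun k (r : Fin R) => z ⟨r, lt_of_lt_of_le r.2 hRmin⟩ k⟩ :
        Matrix (Fin J) (Fin R) ℝ × Matrix (Fin K) (Fin R) ℝ)
  rw [abs_of_nonneg (by linarith)]
  linarith
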